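/- arXiv:1402.4718 — 2 statements merged into one kernel-verified Lean document; each statement's English description precedes it below -/
import Mathlib

section
/- If {x, y} is a minimal separator of a graph G and G contains an xy-path of length k ≥ 2, then G contains a cycle of length at least k + 1. -/
open SimpleGraph

variable {V : Type*}

/-- Reachability within the subgraph of `G` induced by the vertex set `W`. -/
def ReachIn (G : SimpleGraph V) (W : Set V) (x y : V) : Prop :=
  ∃ (hx : x ∈ W) (hy : y ∈ W), (G.induce W).Reachable ⟨x, hx⟩ ⟨y, hy⟩

/-- Removing `S` disconnects some connected component of `G`: there are two vertices
outside `S` that are connected in `G` but not in `G - S`. -/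
def Separates (G : SimpleGraph V) (S : Set V) : Prop :=
  ∃ u v : V, u ∉ S ∧ v ∉ S ∧ G.Reachable u v ∧ ¬ ReachIn G Sᶜ u v

/-- `S` is a minimal separator of `G`. -/
def IsMinimalSeparator (G : SimpleGraph V) (S : Set V) : Prop :=
  Separates G S ∧ ∀ S' ⊂ S, ¬ Separates G S'

/-- `C` is a connected component of the subgraph of `G` induced by `W`. -/
def IsCompOf (G : SimpleGraph V) (C W : Set V) : Prop :=
  C ⊆ W ∧ (G.induce C).Connected ∧ ∀ u ∈ C, ∀ v ∈ W, G.Adj u v → v ∈ C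

/-- A separation `(A, B)` of a graph `G`. -/
def IsSeparation (G : SimpleGraph V) (A B : Set V) : Prop :=
  A ∪ B = Set.univ ∧ ∀ u ∈ A \ B, ∀ v ∈ B \ A, ¬ G.Adj u v

/-- `(T, X)` is a tree decomposition of `G`. -/
structure IsTreeDecomp {ι : Type*} (G : SimpleGraph V) (T : SimpleGraph ι)
    (X : ι → Set V) : Prop where
  isTree : T.IsTree
  covers_verts : ∀ v : V, ∃ i, v ∈ X i
  covers_edges : ∀ ⦃u v : V⦄, G.Adj u v → ∃ i, u ∈ X i ∧ v ∈ X i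
  subtree : ∀ v : V, (T.induce {i | v ∈ X i}).Connected

/-- The tree decomposition given by the bag function `X` has adhesion at most `d`. -/
def AdhesionLE {ι : Type*} (T : SimpleGraph ι) (X : ι → Set V) (d : ℕ) : Prop :=
  ∀ ⦃i j : ι⦄, T.Adj i j → (X i ∩ X j).ncard ≤ d

/-- The torso of the vertex set `W` in `G`: the induced subgraph `G[W]` with an edge added
between each pair of vertices of `W` connected by a path internally avoiding `W`. -/
def torso (G : SimpleGraph V) (W : Set V) : SimpleGraph W :=
  SimpleGraph.fromRel (fun u v =>
    G.Adj u v ∨ ∃ p : G.Walk (u : V) (v : V), p.IsPath ∧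
      ∀ z ∈ p.support, z ≠ (u : V) → z ≠ (v : V) → z ∉ W)

/-- One smoothing step: `K` is obtained from `H` by replacing the degree-2 vertex `v`,
whose two neighbors are `a` and `b`, by a direct edge between `a` and `b`. -/
def SmoothStep (H K : SimpleGraph.Subgraph (⊤ : SimpleGraph V)) : Prop :=
  ∃ v a b : V, a ≠ b ∧ a ≠ v ∧ b ≠ v ∧ v ∈ H.verts ∧ H.neighborSet v = {a, b} ∧
    K.verts = H.verts \ {v} ∧
    ∀ x y : V, K.Adj x y ↔ ((H.Adj x y ∧ x ≠ v ∧ y ≠ v) ∨ (x = a ∧ y = b) ∨ (x = b ∧ y = a))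

/-- `K` (a graph on a subset of the vertices of `G`) is a topological minor of `G`:
it is obtained from a subgraph of `G` by repeatedly smoothing degree-2 vertices. -/
def IsTopMinor (K : SimpleGraph.Subgraph (⊤ : SimpleGraph V)) (G : SimpleGraph V) : Prop :=
  ∃ H₀ : SimpleGraph.Subgraph (⊤ : SimpleGraph V),
    (∀ ⦃x y : V⦄, H₀.Adj x y → G.Adj x y) ∧ Relation.ReflTransGen SmoothStep H₀ K

/-- An abstract graph `H` is a topological minor of `G` if it is isomorphic to some
topological minor of `G`. -/
def IsTopMinorGraph {W : Type*} (H : SimpleGraph W) (G : SimpleGraph V) : Prop :=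
  ∃ K : SimpleGraph.Subgraph (⊤ : SimpleGraph V), IsTopMinor K G ∧ Nonempty (H ≃g K.coe)

/-- One edge-contraction step: `K` is obtained from `H` by contracting the edge `{a, b}`
(the vertex `b` is merged into `a`). -/
def ContractStep (H K : SimpleGraph.Subgraph (⊤ : SimpleGraph V)) : Prop :=
  ∃ a b : V, H.Adj a b ∧ K.verts = H.verts \ {b} ∧
    ∀ x y : V, K.Adj x y ↔ (x ≠ b ∧ y ≠ b ∧ x ≠ y ∧
      (H.Adj x y ∨ (x = a ∧ H.Adj b y) ∨ (y = a ∧ H.Adj x b)))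

/-- `G` contains `Hpat` as a minor: some graph obtained from a subgraph of `G` by
contracting edges is isomorphic to `Hpat`. -/
def HasMinor {W : Type*} (G : SimpleGraph V) (Hpat : SimpleGraph W) : Prop :=
  ∃ H₀ K : SimpleGraph.Subgraph (⊤ : SimpleGraph V),
    (∀ ⦃x y : V⦄, H₀.Adj x y → G.Adj x y) ∧ Relation.ReflTransGen ContractStep H₀ K ∧
      Nonempty (Hpat ≃g K.coe)

/-- Planarity, via Wagner's theorem: no `K₅`-minor and no `K₃,₃`-minor. -/
def IsPlanar (G : SimpleGraph V) : Prop :=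
  ¬ HasMinor G (completeGraph (Fin 5)) ∧ ¬ HasMinor G (completeBipartiteGraph (Fin 3) (Fin 3))

/-- A graph is triconnected if removing fewer than three vertices cannot disconnect it. -/
def Triconnected (G : SimpleGraph V) : Prop :=
  ∀ S : Set V, S.ncard < 3 → (G.induce Sᶜ).Preconnected

/-- A graph is claw-free if it has no induced `K_{1,3}`. -/
def ClawFree (G : SimpleGraph V) : Prop :=
  ∀ v a b c : V, G.Adj v a → G.Adj v b → G.Adj v c → a ≠ b → a ≠ c → b ≠ c →
    ¬ G.Adj a b → ¬ G.Adj a c → G.Adj b c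

/-!
Let `u, v` be vertices separated by `{x, y}`, and `C_u`, `C_v` their components in `G - {x, y}`.
Since `{y}` alone does not separate them, a `u`–`v` walk avoiding `y` passes through `x`, and
its vertex just before the first visit of `x` is a neighbour of `x` in `C_u`; likewise `y` has a
neighbour in `C_u`, and both have neighbours in `C_v`. The interior of the `xy`-path `P` is
connected in `G - {x, y}`, so it misses `C_u` or `C_v`, say `C`. An `xy`-path through `C` is
internally disjoint from `P` and has length at least `2`, so together with `P` it forms a cycle
of length at least `k + 2`.
-/

namespace ReachIn

variable {G : SimpleGraph V} {W : Set V} {a b c : V}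

lemma refl (ha : a ∈ W) : ReachIn G W a a :=
  ⟨ha, ha, .rfl⟩

lemma symm (h : ReachIn G W a b) : ReachIn G W b a :=
  let ⟨ha, hb, r⟩ := h
  ⟨hb, ha, r.symm⟩

lemma trans (h : ReachIn G W a b) (h' : ReachIn G W b c) : ReachIn G W a c :=
  let ⟨ha, _, r⟩ := h
  let ⟨_, hc, r'⟩ := h'
  ⟨ha, hc, r.trans r'⟩

end ReachIn

lemma reachIn_iff_exists_walk {G : SimpleGraph V} {W : Set V} {a b : V} :
    ReachIn G W a b ↔ ∃ w : G.Walk a b, ∀ z ∈ w.support, z ∈ W := by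
  constructor
  · rintro ⟨ha, hb, ⟨w⟩⟩
    refine ⟨w.map (Embedding.induce W).toHom, fun z hz => ?_⟩
    change z ∈ (w.map (Embedding.induce W).toHom).support at hz
    rw [Walk.support_map, List.mem_map] at hz
    obtain ⟨z', -, rfl⟩ := hz
    exact z'.2
  · rintro ⟨w, hw⟩
    exact ⟨hw _ w.start_mem_support, hw _ w.end_mem_support, ⟨w.induce W hw⟩⟩

lemma reachIn_of_mem_support {G : SimpleGraph V} {W : Set V} {a b z : V} {r : G.Walk a b}
    (hr : ∀ z ∈ r.support, z ∈ W) (hz : z ∈ r.support) : ReachIn G W a z := by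
  classical
  exact reachIn_iff_exists_walk.2
    ⟨r.takeUntil z hz, fun z' hz' => hr z' (r.support_takeUntil_subset_support hz hz')⟩

namespace SimpleGraph.Walk

variable {G : SimpleGraph V}

lemma reachIn_diff_or_exists_adj {W : Set V} {x : V} :
    ∀ {u v : V} (w : G.Walk u v), (∀ z ∈ w.support, z ∈ W) → u ≠ x →
      ReachIn G (W \ {x}) u v ∨ ∃ a, G.Adj a x ∧ ReachIn G (W \ {x}) u a
  | _, _, .nil, hw, hux => .inl (.refl ⟨hw _ (by simp), hux⟩)
  | u, _, .cons (v := u') huu' w, hw, hux => by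
    have hu : u ∈ W \ {x} := ⟨hw _ (by simp), hux⟩
    by_cases hu'x : u' = x
    · exact .inr ⟨u, hu'x ▸ huu', .refl hu⟩
    have hstep : ReachIn G (W \ {x}) u u' :=
      reachIn_iff_exists_walk.2 ⟨.cons huu' .nil, by simp_all⟩
    rcases w.reachIn_diff_or_exists_adj (fun z hz => hw z (by simp [hz])) hu'x with
      h | ⟨a, hax, h⟩
    · exact .inl (hstep.trans h)
    · exact .inr ⟨a, hax, hstep.trans h⟩

lemma IsPath.mem_support_of_mem_support_tail {u v z : V} {p : G.Walk u v} (hp : p.IsPath)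
    (hz : z ∈ p.support.tail) : z ∈ p.support ∧ z ≠ u := by
  have hnodup := hp.support_nodup
  rw [← cons_tail_support] at hnodup ⊢
  exact ⟨List.mem_cons_of_mem _ hz, by rintro rfl; exact (List.nodup_cons.1 hnodup).1 hz⟩

lemma IsPath.isCycle_append_reverse {x y : V} {p q : G.Walk x y} (hp : p.IsPath) (hq : q.IsPath)
    (hdisj : ∀ z ∈ p.support, z ∈ q.support → z = x ∨ z = y) (hq₂ : 1 < q.length) :
    (q.append p.reverse).IsCycle := by
  refine hq.isCycle_append hp.reverse (fun z hzq hzp => ?_) (.inl hq₂)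
  obtain ⟨hzq, hzx⟩ := hq.mem_support_of_mem_support_tail hzq
  obtain ⟨hzp, hzy⟩ := hp.reverse.mem_support_of_mem_support_tail hzp
  rw [support_reverse, List.mem_reverse] at hzp
  rcases hdisj z hzp hzq with rfl | rfl <;> contradiction

lemma IsPath.reachIn_of_mem_support {x y t t' : V} {p : G.Walk x y} (hp : p.IsPath)
    (ht : t ∈ p.support) (ht' : t' ∈ p.support) (htS : t ∉ ({x, y} : Set V))
    (ht'S : t' ∉ ({x, y} : Set V)) : ReachIn G ({x, y} : Set V)ᶜ t t' := by
  classical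
  cases p with
  | nil => simp_all
  | @cons _ m _ hxm q =>
    rw [cons_isPath_iff] at hp
    have hm : ∀ s ∈ (cons hxm q).support, s ∉ ({x, y} : Set V) →
        ReachIn G ({x, y} : Set V)ᶜ m s := by
      intro s hs hsS
      have hsq : s ∈ q.support := by simp_all
      refine reachIn_iff_exists_walk.2 ⟨q.takeUntil s hsq, fun z hz => ?_⟩
      have hzx : z ≠ x := by rintro rfl; exact hp.2 (q.support_takeUntil_subset_support hsq hz)
      have hzy : z ≠ y := by
        rintro rfl
        exact endpoint_notMem_support_takeUntil hp.1 hsq (by rintro rfl; simp at hsS) hz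
      simp [hzx, hzy]
    exact (hm t ht htS).symm.trans (hm t' ht' ht'S)

end SimpleGraph.Walk

lemma IsMinimalSeparator.exists_adj_reachIn {G : SimpleGraph V} {S : Set V}
    (hS : IsMinimalSeparator G S) {s u v : V} (hs : s ∈ S) (hu : u ∉ S) (hv : v ∉ S)
    (huv : G.Reachable u v) (hnot : ¬ ReachIn G Sᶜ u v) :
    ∃ a, G.Adj s a ∧ ReachIn G Sᶜ u a := by
  have hreach : ReachIn G (S \ {s})ᶜ u v := by
    by_contra h
    exact hS.2 _ (Set.sdiff_singleton_ssubset.2 hs)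
      ⟨u, v, fun h => hu h.1, fun h => hv h.1, huv, h⟩
  obtain ⟨w, hw⟩ := reachIn_iff_exists_walk.1 hreach
  have hcompl : (S \ {s})ᶜ \ {s} = Sᶜ := by
    ext z
    by_cases hz : z = s <;> simp [hz, hs]
  rw [← hcompl] at hnot ⊢
  rcases w.reachIn_diff_or_exists_adj hw (fun h => hu (h ▸ hs)) with h | ⟨a, has, h⟩
  · exact absurd h hnot
  · exact ⟨a, has.symm, h⟩

lemma exists_isCycle_of_adj_of_reachIn {G : SimpleGraph V} {x y a b w : V} (hxy : x ≠ y)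
    (hxa : G.Adj x a) (hyb : G.Adj y b) (ha : ReachIn G ({x, y} : Set V)ᶜ w a)
    (hb : ReachIn G ({x, y} : Set V)ᶜ w b) {p : G.Walk x y} (hp : p.IsPath)
    (hmiss : ∀ t ∈ p.support, t ∉ ({x, y} : Set V) → ¬ ReachIn G ({x, y} : Set V)ᶜ w t) :
    ∃ c : G.Walk x x, c.IsCycle ∧ p.length + 2 ≤ c.length := by
  classical
  obtain ⟨r, hr⟩ := reachIn_iff_exists_walk.1 (ha.symm.trans hb)
  have hbypass : ∀ z ∈ r.bypass.support,
      z ∈ ({x, y} : Set V)ᶜ ∧ ReachIn G ({x, y} : Set V)ᶜ w z := fun z hz =>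
    have hz := r.support_bypass_subset_support hz
    ⟨hr z hz, ha.trans (reachIn_of_mem_support hr hz)⟩
  let q : G.Walk x y := .cons hxa (r.bypass.concat hyb.symm)
  have hq : q.IsPath := by
    refine (Walk.cons_isPath_iff _ _).2 ⟨r.bypass_isPath.concat (fun hy => ?_) _, fun hx => ?_⟩
    · exact (hbypass y hy).1 (by simp)
    · rw [Walk.support_concat, List.mem_append, List.mem_singleton] at hx
      rcases hx with hx | hx
      · exact (hbypass x hx).1 (by simp)
      · exact hxy hx
  have hdisj : ∀ z ∈ p.support, z ∈ q.support → z = x ∨ z = y := by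
    intro z hzp hzq
    by_contra hzS
    have hz : z ∈ r.bypass.support := by simp_all [q, Walk.support_concat]
    exact hmiss z hzp hzS (hbypass z hz).2
  refine ⟨q.append p.reverse, hp.isCycle_append_reverse hq hdisj (by simp [q]), ?_⟩
  simp [q]

lemma IsMinimalSeparator.exists_isCycle {G : SimpleGraph V} {x y u v : V} (hxy : x ≠ y)
    (hS : IsMinimalSeparator G {x, y}) (hu : u ∉ ({x, y} : Set V)) (hv : v ∉ ({x, y} : Set V))
    (huv : G.Reachable u v) (hnot : ¬ ReachIn G ({x, y} : Set V)ᶜ u v) {p : G.Walk x y}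
    (hp : p.IsPath)
    (hmiss : ∀ t ∈ p.support, t ∉ ({x, y} : Set V) → ¬ ReachIn G ({x, y} : Set V)ᶜ u t) :
    ∃ c : G.Walk x x, c.IsCycle ∧ p.length + 2 ≤ c.length :=
  let ⟨_, hxa, ha⟩ := hS.exists_adj_reachIn (.inl rfl) hu hv huv hnot
  let ⟨_, hyb, hb⟩ := hS.exists_adj_reachIn (.inr rfl) hu hv huv hnot
  exists_isCycle_of_adj_of_reachIn hxy hxa hyb ha hb hp hmiss

theorem xySeparator_path_gives_cycle_general (G : SimpleGraph V)
    (x y : V) (hxy : x ≠ y) (hsep : IsMinimalSeparator G {x, y})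
    (k : ℕ) (p : G.Walk x y) (hp : p.IsPath) (hlen : p.length = k) :
    ∃ (v : V) (c : G.Walk v v), c.IsCycle ∧ k + 1 ≤ c.length := by
  obtain ⟨u, v, hu, hv, huv, hnot⟩ := hsep.1
  suffices ∃ c : G.Walk x x, c.IsCycle ∧ p.length + 2 ≤ c.length by
    obtain ⟨c, hc, hlenc⟩ := this
    exact ⟨x, c, hc, by omega⟩
  by_cases hmiss :
      ∀ t ∈ p.support, t ∉ ({x, y} : Set V) → ¬ ReachIn G ({x, y} : Set V)ᶜ u t
  · exact hsep.exists_isCycle hxy hu hv huv hnot hp hmiss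
  refine hsep.exists_isCycle hxy hv hu huv.symm (fun h => hnot h.symm) hp
    fun t' ht' ht'S hvt' => hmiss fun t ht htS hut => hnot ?_
  exact hut.trans ((hp.reachIn_of_mem_support ht ht' htS ht'S).trans hvt'.symm)

/-- If `{x, y}` is a minimal separator of `G` and `G` contains an `xy`-path of length
`k ≥ 2`, then `G` contains a cycle of length at least `k + 1`. -/
theorem xySeparator_path_gives_cycle [Fintype V] (G : SimpleGraph V)
    (x y : V) (hxy : x ≠ y) (hsep : IsMinimalSeparator G {x, y})
    (k : ℕ) (hk : 2 ≤ k) (p : G.Walk x y) (hp : p.IsPath) (hlen : p.length = k) :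
    ∃ (v : V) (c : G.Walk v v), c.IsCycle ∧ k + 1 ≤ c.length :=
  xySeparator_path_gives_cycle_general G x y hxy hsep k p hp hlen
end

section
/- Let (A, B) be a separation of order two of a graph G with A ∩ B = {x, y}. Let P_1 be a maximum-length x-path in G[A] - {y}; P_2 a maximum-length y-path in G[A] - {x}; P_3 a maximum-length x-path in G[A]; P_4 a maximum-length y-path in G[A]; P_5 a maximum-length xy-path in G[A] (or empty if none exists); and P_6 a pair of vertex-disjoint paths in G[A], one ending in x and one ending in y, of maximum combined length. If G has a path of length at least k, then G[A] has a path of length at least k, or the induced subgraph of G on the union of B with the vertex sets of P_1 through P_6 has a path of length at least k. -/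
open SimpleGraph

variable {V : Type*}

/-! A path `P` of `G` passes through the separator `{x, y}` at most twice, so it splits into at
most three segments, each inside `A` or inside `B`, any two of them meeting only in `x` or `y`.
Let `U = V(P₁) ∪ ⋯ ∪ V(P₆) ∪ B`. If every segment lies in `A`, or every segment in `B`, we are
done. Otherwise the segments inside `A` form an `x`-path avoiding `y`, a `y`-path avoiding `x`,
an `x`-path, a `y`-path, an `xy`-path, or a disjoint pair of an `x`-path and a `y`-path in
`G[A]`. Replacing them by the corresponding one of `P₁, …, P₆` gives a path of `G[U]` that is not
shorter: the replacement lies in `A`, so it meets the segments in `B` only in separator vertices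
that the replaced segments already shared with them. -/

namespace SimpleGraph.Walk

variable {G : SimpleGraph V} {u v w : V}

theorem IsPath.append {p : G.Walk u v} {q : G.Walk v w} (hp : p.IsPath) (hq : q.IsPath)
    (h : ∀ z ∈ p.support, z ∈ q.support → z = v) : (p.append q).IsPath := by
  rw [isPath_def, support_append, List.nodup_append]
  refine ⟨hp.support_nodup, hq.support_nodup.sublist q.support.tail_sublist, ?_⟩
  rintro z hzp _ hzq rfl
  have hz : z = v := h z hzp (List.mem_of_mem_tail hzq)
  subst hz
  have hnd := hq.support_nodup
  rw [← cons_tail_support, List.nodup_cons] at hnd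
  exact hnd.1 hzq

theorem IsPath.eq_of_mem_support_append {p : G.Walk u v} {q : G.Walk v w}
    (h : (p.append q).IsPath) {z : V} (hzp : z ∈ p.support) (hzq : z ∈ q.support) : z = v := by
  by_contra hzv
  exact h.ne_of_mem_support_of_append hzv hzp hzq rfl

theorem length_induce (s : Set V) (p : G.Walk u v) (hp : ∀ z ∈ p.support, z ∈ s) :
    (p.induce s hp).length = p.length := by
  conv_rhs => rw [← map_induce p hp]
  exact (length_map _ _).symm

theorem IsPath.induce {s : Set V} {p : G.Walk u v} (h : p.IsPath)
    (hp : ∀ z ∈ p.support, z ∈ s) : (p.induce s hp).IsPath := by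
  rw [← map_induce p hp] at h
  exact (isPath_map_iff_of_injective Subtype.val_injective).mp h

theorem forall_mem_support_append {p : G.Walk u v} {q : G.Walk v w} {P : V → Prop} :
    (∀ z ∈ (p.append q).support, P z) ↔ (∀ z ∈ p.support, P z) ∧ ∀ z ∈ q.support, P z := by
  simp only [mem_support_append_iff, or_imp, forall_and]

@[simp]
theorem forall_mem_support_reverse {p : G.Walk u v} {P : V → Prop} :
    (∀ z ∈ p.reverse.support, P z) ↔ ∀ z ∈ p.support, P z := by
  simp only [support_reverse, List.mem_reverse]

end SimpleGraph.Walk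


namespace IsSeparation

variable {G : SimpleGraph V} {A B : Set V}

theorem symm (h : IsSeparation G A B) : IsSeparation G B A :=
  ⟨Set.union_comm A B ▸ h.1, fun u hu v hv huv => h.2 v hv u hu huv.symm⟩

theorem mem_or_mem (h : IsSeparation G A B) (z : V) : z ∈ A ∨ z ∈ B :=
  (Set.mem_union z A B).mp (h.1 ▸ Set.mem_univ z)

theorem adj_mem_or (h : IsSeparation G A B) {a b : V} (hab : G.Adj a b) :
    (a ∈ A ∧ b ∈ A) ∨ (a ∈ B ∧ b ∈ B) := by
  have hab' : a ∈ A \ B → b ∈ B \ A → False := fun ha hb => h.2 a ha b hb hab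
  have hba : b ∈ A \ B → a ∈ B \ A → False := fun hb ha => h.2 b hb a ha hab.symm
  have := h.mem_or_mem a
  have := h.mem_or_mem b
  simp only [Set.mem_sdiff] at hab' hba
  tauto

theorem forall_mem_support_cons_or (h : IsSeparation G A B) {a b v : V} (hab : G.Adj a b)
    {p : G.Walk b v} (hp : p.IsPath) (hpA : ∀ z ∈ p.support, z ∈ A) (hb : b ∈ B → b = v) :
    (∀ z ∈ (p.cons hab).support, z ∈ A) ∨ (∀ z ∈ (p.cons hab).support, z ∈ B) := by
  by_cases ha : a ∈ A
  · exact Or.inl (by simpa [ha] using hpA)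
  · have hbB : b ∈ B := ((h.adj_mem_or hab).resolve_left (fun h => ha h.1)).2
    obtain rfl := hb hbB
    obtain rfl := (Walk.isPath_iff_nil.mp hp).eq_nil
    have haB := (h.mem_or_mem a).resolve_left ha
    exact Or.inr (by simp [haB, hbB])

theorem forall_mem_support_or (h : IsSeparation G A B) {u v : V} (p : G.Walk u v)
    (hp : p.IsPath) (hends : ∀ z ∈ p.support, z ∈ A ∩ B → z = u ∨ z = v) :
    (∀ z ∈ p.support, z ∈ A) ∨ (∀ z ∈ p.support, z ∈ B) := by
  induction p with
  | nil => simpa using h.mem_or_mem _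
  | @cons a b v hab p ih =>
    rw [Walk.cons_isPath_iff] at hp
    have hends' : ∀ z ∈ p.support, z ∈ A ∩ B → z = b ∨ z = v := fun z hz hzAB =>
      Or.inr ((hends z (by simp [hz]) hzAB).resolve_left (by rintro rfl; exact hp.2 hz))
    have hb : b ∈ A ∩ B → b = v := fun hbAB =>
      ((hends b (by simp) hbAB).resolve_left (G.ne_of_adj hab).symm)
    rcases ih hp.1 hends' with hpA | hpB
    · exact h.forall_mem_support_cons_or hab hp.1 hpA fun hbB => hb ⟨hpA b p.start_mem_support, hbB⟩
    · exact (h.symm.forall_mem_support_cons_or hab hp.1 hpB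
        fun hbA => hb ⟨hbA, hpB b p.start_mem_support⟩).symm

theorem forall_mem_support_or_of_inter_eq_pair (h : IsSeparation G A B) {x y : V}
    (hAB : A ∩ B = {x, y}) {u v : V} (p : G.Walk u v) (hp : p.IsPath)
    (hx : x ∈ p.support → x = u ∨ x = v) (hy : y ∈ p.support → y = u ∨ y = v) :
    (∀ z ∈ p.support, z ∈ A) ∨ (∀ z ∈ p.support, z ∈ B) :=
  h.forall_mem_support_or p hp fun z hz hzAB => by
    rw [hAB] at hzAB
    rcases hzAB with rfl | rfl
    exacts [hx hz, hy hz]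

end IsSeparation

section Surgery

open Walk

variable {G : SimpleGraph V} {W U : Set V} {a b u v : V} {k : ℕ}

def HasLongPathIn (G : SimpleGraph V) (k : ℕ) (W : Set V) : Prop :=
  ∃ (u v : W) (P : (G.induce W).Walk u v), P.IsPath ∧ k ≤ P.length

theorem hasLongPathIn_of_isPath {p : G.Walk u v} (hp : p.IsPath) (hk : k ≤ p.length)
    (hW : ∀ z ∈ p.support, z ∈ W) : HasLongPathIn G k W :=
  ⟨_, _, p.induce W hW, hp.induce hW, (p.length_induce W hW).symm ▸ hk⟩

/-- The only property of a longest `a`-path of `G[W]` with vertices in `U` that the argument uses;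
the two variants below play the same role for `ab`-paths and for disjoint pairs of an `a`-path
and a `b`-path. -/
def CapturesPathsFrom (G : SimpleGraph V) (W U : Set V) (a : V) : Prop :=
  ∀ ⦃c : V⦄ (q : G.Walk a c), q.IsPath → (∀ z ∈ q.support, z ∈ W) →
    ∃ (d : V) (p : G.Walk a d), p.IsPath ∧ (∀ z ∈ p.support, z ∈ W ∩ U) ∧ q.length ≤ p.length

def CapturesPathsBetween (G : SimpleGraph V) (W U : Set V) (a b : V) : Prop :=
  ∀ q : G.Walk a b, q.IsPath → (∀ z ∈ q.support, z ∈ W) →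
    ∃ p : G.Walk a b, p.IsPath ∧ (∀ z ∈ p.support, z ∈ W ∩ U) ∧ q.length ≤ p.length

def CapturesDisjointPaths (G : SimpleGraph V) (W U : Set V) (a b : V) : Prop :=
  ∀ ⦃c d : V⦄ (q : G.Walk a c) (r : G.Walk b d), q.IsPath → r.IsPath →
    (∀ z ∈ q.support, z ∈ W) → (∀ z ∈ r.support, z ∈ W) → q.support.Disjoint r.support →
    ∃ (c' d' : V) (p : G.Walk a c') (s : G.Walk b d'), p.IsPath ∧ s.IsPath ∧
      (∀ z ∈ p.support, z ∈ W ∩ U) ∧ (∀ z ∈ s.support, z ∈ W ∩ U) ∧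
      p.support.Disjoint s.support ∧ q.length + r.length ≤ p.length + s.length

theorem CapturesPathsBetween.symm (h : CapturesPathsBetween G W U a b) :
    CapturesPathsBetween G W U b a := by
  intro q hq hqW
  obtain ⟨p, hp, hpWU, hlen⟩ := h q.reverse hq.reverse (by simpa using hqW)
  exact ⟨p.reverse, hp.reverse, by simpa using hpWU, by simpa using hlen⟩

theorem CapturesDisjointPaths.symm (h : CapturesDisjointPaths G W U a b) :
    CapturesDisjointPaths G W U b a := by
  intro c d q r hq hr hqW hrW hqr
  obtain ⟨c', d', p, s, hp, hs, hpWU, hsWU, hps, hlen⟩ := h r q hr hq hrW hqW hqr.symm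
  exact ⟨d', c', s, p, hs, hp, hsWU, hpWU, hps.symm, by omega⟩

theorem CapturesPathsFrom.hasLongPathIn (hcap : CapturesPathsFrom G W U a)
    {Q : G.Walk u a} {R : G.Walk a v} (hP : (Q.append R).IsPath)
    (hQ : ∀ z ∈ Q.support, z ∈ W) (hR : ∀ z ∈ R.support, z ∈ U)
    (hRW : ∀ z ∈ R.support, z ∈ W → z = a) (hk : k ≤ Q.length + R.length) :
    HasLongPathIn G k U := by
  obtain ⟨d, p, hp, hpWU, hlen⟩ := hcap Q.reverse hP.of_append_left.reverse (by simpa using hQ)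
  refine hasLongPathIn_of_isPath (p := p.reverse.append R)
    (hp.reverse.append hP.of_append_right fun z hz hzR => hRW z hzR (hpWU z (by simpa using hz)).1)
    (by simp only [length_append, length_reverse] at hlen ⊢; omega)
    (forall_mem_support_append.mpr ⟨by simpa using fun z hz => (hpWU z hz).2, hR⟩)

theorem CapturesPathsBetween.hasLongPathIn (hcap : CapturesPathsBetween G W U a b)
    {Q₁ : G.Walk u a} {Q₂ : G.Walk a b} {Q₃ : G.Walk b v} (hP : (Q₁.append (Q₂.append Q₃)).IsPath)
    (hQ₂ : ∀ z ∈ Q₂.support, z ∈ W) (hQ₁ : ∀ z ∈ Q₁.support, z ∈ U)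
    (hQ₃ : ∀ z ∈ Q₃.support, z ∈ U) (hQ₁W : ∀ z ∈ Q₁.support, z ∈ W → z = a)
    (hQ₃W : ∀ z ∈ Q₃.support, z ∈ W → z = b) (hk : k ≤ Q₁.length + Q₂.length + Q₃.length) :
    HasLongPathIn G k U := by
  have hQ₂₃ := hP.of_append_right
  obtain ⟨p, hp, hpWU, hlen⟩ := hcap Q₂ hQ₂₃.of_append_left hQ₂
  have hpQ₃ : (p.append Q₃).IsPath :=
    hp.append hQ₂₃.of_append_right fun z hz hz₃ => hQ₃W z hz₃ (hpWU z hz).1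
  refine hasLongPathIn_of_isPath (p := Q₁.append (p.append Q₃))
    (hP.of_append_left.append hpQ₃ fun z hz₁ hz => ?_)
    (by simp only [length_append]; omega) ?_
  · rcases (mem_support_append_iff _ _).mp hz with hzp | hz₃
    · exact hQ₁W z hz₁ (hpWU z hzp).1
    · exact hP.eq_of_mem_support_append hz₁ (by simp [hz₃])
  · simp only [forall_mem_support_append]
    exact ⟨hQ₁, fun z hz => (hpWU z hz).2, hQ₃⟩

theorem CapturesDisjointPaths.hasLongPathIn (hcap : CapturesDisjointPaths G W U a b)
    (hab : a ≠ b) {Q₁ : G.Walk u a} {Q₂ : G.Walk a b} {Q₃ : G.Walk b v}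
    (hP : (Q₁.append (Q₂.append Q₃)).IsPath) (hQ₁ : ∀ z ∈ Q₁.support, z ∈ W)
    (hQ₃ : ∀ z ∈ Q₃.support, z ∈ W) (hQ₂ : ∀ z ∈ Q₂.support, z ∈ U)
    (hQ₂W : ∀ z ∈ Q₂.support, z ∈ W → z = a ∨ z = b)
    (hk : k ≤ Q₁.length + Q₂.length + Q₃.length) :
    HasLongPathIn G k U := by
  have hQ₂₃ := hP.of_append_right
  have hQ₁₃ : Q₁.reverse.support.Disjoint Q₃.support := by
    intro z hz₁ hz₃
    rw [support_reverse, List.mem_reverse] at hz₁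
    obtain rfl := hP.eq_of_mem_support_append hz₁ (by simp [hz₃])
    exact hab (hQ₂₃.eq_of_mem_support_append Q₂.start_mem_support hz₃)
  obtain ⟨c, d, p, s, hp, hs, hpWU, hsWU, hps, hlen⟩ :=
    hcap Q₁.reverse Q₃ hP.of_append_left.reverse hQ₂₃.of_append_right (by simpa using hQ₁) hQ₃
      hQ₁₃
  have hQ₂s : (Q₂.append s).IsPath := hQ₂₃.of_append_left.append hs fun z hz₂ hzs =>
    ((hQ₂W z hz₂ (hsWU z hzs).1).resolve_left (by rintro rfl; exact hps p.start_mem_support hzs))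
  refine hasLongPathIn_of_isPath (p := p.reverse.append (Q₂.append s))
    (hp.reverse.append hQ₂s fun z hz hz' => ?_)
    (by simp only [length_append, length_reverse] at hlen ⊢; omega) ?_
  · rw [support_reverse, List.mem_reverse] at hz
    rcases (mem_support_append_iff _ _).mp hz' with hz₂ | hzs
    · exact (hQ₂W z hz₂ (hpWU z hz).1).resolve_right
        (by rintro rfl; exact hps hz s.start_mem_support)
    · exact (hps hz hzs).elim
  · simp only [forall_mem_support_append, forall_mem_support_reverse]
    exact ⟨fun z hz => (hpWU z hz).2, hQ₂, fun z hz => (hsWU z hz).2⟩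

end Surgery

/-- The six fields correspond to the paths `P₁, …, P₆`. -/
structure CapturesSeparatorPaths (G : SimpleGraph V) (A U : Set V) (x y : V) : Prop where
  fst_avoiding : CapturesPathsFrom G (A \ {y}) U x
  snd_avoiding : CapturesPathsFrom G (A \ {x}) U y
  fst : CapturesPathsFrom G A U x
  snd : CapturesPathsFrom G A U y
  between : CapturesPathsBetween G A U x y
  disjoint : CapturesDisjointPaths G A U x y

theorem CapturesSeparatorPaths.symm {G : SimpleGraph V} {A U : Set V} {x y : V}
    (h : CapturesSeparatorPaths G A U x y) : CapturesSeparatorPaths G A U y x :=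
  ⟨h.snd_avoiding, h.fst_avoiding, h.snd, h.fst, h.between.symm, h.disjoint.symm⟩

section Separation

open Walk

variable {G : SimpleGraph V} {A B U : Set V} {x y u v : V} {k : ℕ}

theorem eq_or_eq_of_inter_eq_pair (hAB : A ∩ B = {x, y}) {z : V} (hzA : z ∈ A) (hzB : z ∈ B) :
    z = x ∨ z = y := by
  have hz : z ∈ A ∩ B := ⟨hzA, hzB⟩
  rwa [hAB] at hz

theorem hasLongPathIn_of_mem_support_of_not_mem_support (hsep : IsSeparation G A B)
    (hAB : A ∩ B = {x, y}) (hBU : B ⊆ U) (hcap : CapturesPathsFrom G (A \ {y}) U x)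
    {Q : G.Walk u x} {R : G.Walk x v} (hP : (Q.append R).IsPath)
    (hy : y ∉ (Q.append R).support) (hk : k ≤ Q.length + R.length) :
    HasLongPathIn G k A ∨ HasLongPathIn G k U := by
  have hyQ : y ∉ Q.support := fun h => hy (by simp [h])
  have hyR : y ∉ R.support := fun h => hy (by simp [h])
  have hmem : ∀ z ∈ A \ {y}, z ∈ B → z = x := fun z hzA hzB =>
    (eq_or_eq_of_inter_eq_pair hAB hzA.1 hzB).resolve_right hzA.2
  have hlen : k ≤ (Q.append R).length := by simpa using hk
  rcases hsep.forall_mem_support_or_of_inter_eq_pair hAB Q hP.of_append_left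
      (fun _ => Or.inr rfl) (absurd · hyQ) with hQA | hQB <;>
    rcases hsep.forall_mem_support_or_of_inter_eq_pair hAB R hP.of_append_right
      (fun _ => Or.inl rfl) (absurd · hyR) with hRA | hRB
  · exact .inl (hasLongPathIn_of_isPath hP hlen (forall_mem_support_append.mpr ⟨hQA, hRA⟩))
  · exact .inr (hcap.hasLongPathIn hP (fun z hz => ⟨hQA z hz, by rintro rfl; exact hyQ hz⟩)
      (fun z hz => hBU (hRB z hz)) (fun z hz hzA => hmem z hzA (hRB z hz)) hk)
  · refine .inr (hcap.hasLongPathIn (Q := R.reverse) (R := Q.reverse)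
      (by simpa [reverse_append] using hP.reverse) ?_ ?_ ?_ (by simp; omega))
    · simpa using fun z hz => ⟨hRA z hz, by rintro rfl; exact hyR hz⟩
    · simpa using fun z hz => hBU (hQB z hz)
    · simpa using fun z hz hzA => hmem z hzA (hQB z hz)
  · exact .inr (hasLongPathIn_of_isPath hP hlen
      (forall_mem_support_append.mpr ⟨fun z hz => hBU (hQB z hz), fun z hz => hBU (hRB z hz)⟩))

theorem hasLongPathIn_of_first_segment_subset (hsep : IsSeparation G A B)
    (hAB : A ∩ B = {x, y}) (hxy : x ≠ y) (hBU : B ⊆ U) (hcap : CapturesSeparatorPaths G A U x y)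
    {Q₁ : G.Walk u x} {Q₂ : G.Walk x y} {Q₃ : G.Walk y v}
    (hP : (Q₁.append (Q₂.append Q₃)).IsPath) (hk : k ≤ Q₁.length + Q₂.length + Q₃.length)
    (hyQ₁ : y ∉ Q₁.support) (hxQ₃ : x ∉ Q₃.support) (h₁A : ∀ z ∈ Q₁.support, z ∈ A) :
    HasLongPathIn G k A ∨ HasLongPathIn G k U := by
  rcases hsep.forall_mem_support_or_of_inter_eq_pair hAB Q₂ hP.of_append_right.of_append_left
      (fun _ => Or.inl rfl) (fun _ => Or.inr rfl) with h₂A | h₂B <;>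
    rcases hsep.forall_mem_support_or_of_inter_eq_pair hAB Q₃ hP.of_append_right.of_append_right
      (absurd · hxQ₃) (fun _ => Or.inl rfl) with h₃A | h₃B
  · refine .inl (hasLongPathIn_of_isPath hP (by simp; omega) ?_)
    simp only [forall_mem_support_append]
    exact ⟨h₁A, h₂A, h₃A⟩
  · refine .inr (hcap.snd.hasLongPathIn (by rwa [← append_assoc])
      (forall_mem_support_append.mpr ⟨h₁A, h₂A⟩) (fun z hz => hBU (h₃B z hz))
      (fun z hz hzA => ?_) (by simp; omega))
    exact (eq_or_eq_of_inter_eq_pair hAB hzA (h₃B z hz)).resolve_left (by rintro rfl; exact hxQ₃ hz)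
  · exact .inr (hcap.disjoint.hasLongPathIn hxy hP h₁A h₃A (fun z hz => hBU (h₂B z hz))
      (fun z hz hzA => eq_or_eq_of_inter_eq_pair hAB hzA (h₂B z hz)) hk)
  · refine .inr (hcap.fst_avoiding.hasLongPathIn hP
      (fun z hz => ⟨h₁A z hz, by rintro rfl; exact hyQ₁ hz⟩) ?_ ?_ (by simp; omega))
    · simp only [forall_mem_support_append]
      exact ⟨fun z hz => hBU (h₂B z hz), fun z hz => hBU (h₃B z hz)⟩
    · simp only [forall_mem_support_append]
      exact ⟨fun z hz hzA => (eq_or_eq_of_inter_eq_pair hAB hzA.1 (h₂B z hz)).resolve_right hzA.2,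
        fun z hz hzA => (eq_or_eq_of_inter_eq_pair hAB hzA.1 (h₃B z hz)).resolve_right hzA.2⟩

theorem hasLongPathIn_of_outer_segments_subset (hsep : IsSeparation G A B)
    (hAB : A ∩ B = {x, y}) (hBU : B ⊆ U) (hcap : CapturesPathsBetween G A U x y)
    {Q₁ : G.Walk u x} {Q₂ : G.Walk x y} {Q₃ : G.Walk y v}
    (hP : (Q₁.append (Q₂.append Q₃)).IsPath) (hk : k ≤ Q₁.length + Q₂.length + Q₃.length)
    (hyQ₁ : y ∉ Q₁.support) (hxQ₃ : x ∉ Q₃.support) (h₁B : ∀ z ∈ Q₁.support, z ∈ B)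
    (h₃B : ∀ z ∈ Q₃.support, z ∈ B) :
    HasLongPathIn G k A ∨ HasLongPathIn G k U := by
  rcases hsep.forall_mem_support_or_of_inter_eq_pair hAB Q₂ hP.of_append_right.of_append_left
      (fun _ => Or.inl rfl) (fun _ => Or.inr rfl) with h₂A | h₂B
  · refine .inr (hcap.hasLongPathIn hP h₂A (fun z hz => hBU (h₁B z hz))
      (fun z hz => hBU (h₃B z hz)) (fun z hz hzA => ?_) (fun z hz hzA => ?_) hk)
    · exact (eq_or_eq_of_inter_eq_pair hAB hzA (h₁B z hz)).resolve_right
        (by rintro rfl; exact hyQ₁ hz)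
    · exact (eq_or_eq_of_inter_eq_pair hAB hzA (h₃B z hz)).resolve_left
        (by rintro rfl; exact hxQ₃ hz)
  · refine .inr (hasLongPathIn_of_isPath hP (by simp; omega) ?_)
    simp only [forall_mem_support_append]
    exact ⟨fun z hz => hBU (h₁B z hz), fun z hz => hBU (h₂B z hz), fun z hz => hBU (h₃B z hz)⟩

theorem hasLongPathIn_of_mem_support_of_mem_support (hsep : IsSeparation G A B)
    (hAB : A ∩ B = {x, y}) (hxy : x ≠ y) (hBU : B ⊆ U) (hcap : CapturesSeparatorPaths G A U x y)
    {Q₁ : G.Walk u x} {Q₂ : G.Walk x y} {Q₃ : G.Walk y v}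
    (hP : (Q₁.append (Q₂.append Q₃)).IsPath) (hk : k ≤ Q₁.length + Q₂.length + Q₃.length) :
    HasLongPathIn G k A ∨ HasLongPathIn G k U := by
  have hyQ₁ : y ∉ Q₁.support := fun hy => hxy (hP.eq_of_mem_support_append hy (by simp)).symm
  have hxQ₃ : x ∉ Q₃.support := fun hx =>
    hxy (hP.of_append_right.eq_of_mem_support_append Q₂.start_mem_support hx)
  rcases hsep.forall_mem_support_or_of_inter_eq_pair hAB Q₁ hP.of_append_left
      (fun _ => Or.inr rfl) (absurd · hyQ₁) with h₁A | h₁B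
  · exact hasLongPathIn_of_first_segment_subset hsep hAB hxy hBU hcap hP hk hyQ₁ hxQ₃ h₁A
  rcases hsep.forall_mem_support_or_of_inter_eq_pair hAB Q₃ hP.of_append_right.of_append_right
      (absurd · hxQ₃) (fun _ => Or.inl rfl) with h₃A | h₃B
  · refine hasLongPathIn_of_first_segment_subset hsep (by rw [hAB, Set.pair_comm]) hxy.symm hBU
      hcap.symm (Q₁ := Q₃.reverse) (Q₂ := Q₂.reverse) (Q₃ := Q₁.reverse)
      (by simpa [reverse_append, append_assoc] using hP.reverse) (by simp; omega)
      (by simpa using hxQ₃) (by simpa using hyQ₁) (by simpa using h₃A)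
  · exact hasLongPathIn_of_outer_segments_subset hsep hAB hBU hcap.between hP hk hyQ₁ hxQ₃ h₁B h₃B

theorem hasLongPathIn_of_captures (hsep : IsSeparation G A B) (hAB : A ∩ B = {x, y})
    (hxy : x ≠ y) (hBU : B ⊆ U) (hcap : CapturesSeparatorPaths G A U x y) {P : G.Walk u v}
    (hP : P.IsPath) (hk : k ≤ P.length) :
    HasLongPathIn G k A ∨ HasLongPathIn G k U := by
  have hBA : A ∩ B = {y, x} := by rw [hAB, Set.pair_comm]
  by_cases hx : x ∈ P.support <;> by_cases hy : y ∈ P.support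
  · obtain ⟨Q, R, rfl⟩ := mem_support_iff_exists_append.mp hx
    rcases (mem_support_append_iff Q R).mp hy with hyQ | hyR
    · obtain ⟨Q₁, Q₂, rfl⟩ := mem_support_iff_exists_append.mp hyQ
      rw [← append_assoc] at hP
      exact hasLongPathIn_of_mem_support_of_mem_support hsep hBA hxy.symm hBU hcap.symm hP
        (by simpa [add_assoc] using hk)
    · obtain ⟨R₁, R₂, rfl⟩ := mem_support_iff_exists_append.mp hyR
      exact hasLongPathIn_of_mem_support_of_mem_support hsep hAB hxy hBU hcap hP
        (by simpa [add_assoc] using hk)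
  · obtain ⟨Q, R, rfl⟩ := mem_support_iff_exists_append.mp hx
    exact hasLongPathIn_of_mem_support_of_not_mem_support hsep hAB hBU hcap.fst_avoiding hP hy
      (by simpa using hk)
  · obtain ⟨Q, R, rfl⟩ := mem_support_iff_exists_append.mp hy
    exact hasLongPathIn_of_mem_support_of_not_mem_support hsep hBA hBU hcap.snd_avoiding hP hx
      (by simpa using hk)
  · rcases hsep.forall_mem_support_or_of_inter_eq_pair hAB P hP (absurd · hx) (absurd · hy)
      with hPA | hPB
    · exact .inl (hasLongPathIn_of_isPath hP hk hPA)
    · exact .inr (hasLongPathIn_of_isPath hP hk fun z hz => hBU (hPB z hz))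

end Separation

section Induce

variable {G : SimpleGraph V} {W U : Set V} {a b : V}

theorem forall_mem_support_map_induce {c d : W} (p : (G.induce W).Walk c d)
    (hU : Subtype.val '' {w | w ∈ p.support} ⊆ U) :
    ∀ z ∈ (p.map (Embedding.induce W).toHom).support, z ∈ W ∩ U := by
  simp only [Walk.support_map, List.mem_map]
  rintro _ ⟨w, hw, rfl⟩
  exact ⟨w.2, hU ⟨w, hw, rfl⟩⟩

theorem capturesPathsFrom_of_forall_length_le (ha : a ∈ W) {c : W}
    {p : (G.induce W).Walk ⟨a, ha⟩ c} (hp : p.IsPath)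
    (hmax : ∀ (d : W) (q : (G.induce W).Walk ⟨a, ha⟩ d), q.IsPath → q.length ≤ p.length)
    (hU : Subtype.val '' {w | w ∈ p.support} ⊆ U) : CapturesPathsFrom G W U a := by
  intro d q hq hqW
  refine ⟨c, p.map (Embedding.induce W).toHom, hp.map Subtype.val_injective,
    forall_mem_support_map_induce p hU, ?_⟩
  calc q.length = (q.induce W hqW).length := (q.length_induce W hqW).symm
    _ ≤ p.length := hmax _ _ (hq.induce hqW)
    _ = _ := (Walk.length_map _ _).symm

theorem capturesPathsBetween_of_forall_length_le (ha : a ∈ W) (hb : b ∈ W)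
    {p : (G.induce W).Walk ⟨a, ha⟩ ⟨b, hb⟩} (hp : p.IsPath)
    (hmax : ∀ q : (G.induce W).Walk ⟨a, ha⟩ ⟨b, hb⟩, q.IsPath → q.length ≤ p.length)
    (hU : Subtype.val '' {w | w ∈ p.support} ⊆ U) : CapturesPathsBetween G W U a b := by
  intro q hq hqW
  refine ⟨p.map (Embedding.induce W).toHom, hp.map Subtype.val_injective,
    forall_mem_support_map_induce p hU, ?_⟩
  calc q.length = (q.induce W hqW).length := (q.length_induce W hqW).symm
    _ ≤ p.length := hmax _ (hq.induce hqW)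
    _ = _ := (Walk.length_map _ _).symm

theorem capturesPathsBetween_of_not_exists (ha : a ∈ W) (hb : b ∈ W)
    (h : ¬ ∃ p : (G.induce W).Walk ⟨a, ha⟩ ⟨b, hb⟩, p.IsPath) : CapturesPathsBetween G W U a b :=
  fun q hq hqW => (h ⟨q.induce W hqW, hq.induce hqW⟩).elim

theorem capturesDisjointPaths_of_forall_length_le (ha : a ∈ W) (hb : b ∈ W) {c d : W}
    {p : (G.induce W).Walk ⟨a, ha⟩ c} {s : (G.induce W).Walk ⟨b, hb⟩ d} (hp : p.IsPath)
    (hs : s.IsPath) (hps : ∀ w ∈ p.support, w ∉ s.support)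
    (hmax : ∀ (c' d' : W) (p' : (G.induce W).Walk ⟨a, ha⟩ c')
      (s' : (G.induce W).Walk ⟨b, hb⟩ d'), p'.IsPath → s'.IsPath →
      (∀ w ∈ p'.support, w ∉ s'.support) → p'.length + s'.length ≤ p.length + s.length)
    (hpU : Subtype.val '' {w | w ∈ p.support} ⊆ U) (hsU : Subtype.val '' {w | w ∈ s.support} ⊆ U) :
    CapturesDisjointPaths G W U a b := by
  intro c' d' q r hq hr hqW hrW hqr
  refine ⟨c, d, p.map (Embedding.induce W).toHom, s.map (Embedding.induce W).toHom,
    hp.map Subtype.val_injective, hs.map Subtype.val_injective,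
    forall_mem_support_map_induce p hpU, forall_mem_support_map_induce s hsU, ?_, ?_⟩
  · intro z hzp hzs
    obtain ⟨w, hwp, rfl⟩ := List.mem_map.mp (Walk.support_map _ p ▸ hzp)
    obtain ⟨w', hws, hw'⟩ := List.mem_map.mp (Walk.support_map _ s ▸ hzs)
    exact hps w hwp (Subtype.val_injective hw' ▸ hws)
  · have hle := hmax _ _ _ _ (hq.induce hqW) (hr.induce hrW) fun w hwq hwr => by
      simp only [Walk.support_induce, List.mem_attachWith] at hwq hwr
      exact hqr hwq hwr
    rw [q.length_induce W hqW, r.length_induce W hrW] at hle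
    exact hle.trans_eq (congrArg₂ _ (Walk.length_map _ _) (Walk.length_map _ _)).symm

end Induce

theorem paths_through_separation_general (G : SimpleGraph V) (k : ℕ)
    (A B : Set V) (x y : V) (hsep : IsSeparation G A B) (hAB : A ∩ B = {x, y})
    (hxy : x ≠ y) (hxA : x ∈ A) (hyA : y ∈ A)
    (S1 S2 S3 S4 S5 S6 : Set V)
    -- P₁ : a maximum-length x-path in G[A] - {y}
    (hS1 : ∃ (hx1 : x ∈ A \ {y}) (z : ↥(A \ {y}))
        (p : (G.induce (A \ {y})).Walk ⟨x, hx1⟩ z), p.IsPath ∧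
        (∀ (w : ↥(A \ {y})) (q : (G.induce (A \ {y})).Walk ⟨x, hx1⟩ w),
          q.IsPath → q.length ≤ p.length) ∧
        S1 = Subtype.val '' {a | a ∈ p.support})
    -- P₂ : a maximum-length y-path in G[A] - {x}
    (hS2 : ∃ (hy2 : y ∈ A \ {x}) (z : ↥(A \ {x}))
        (p : (G.induce (A \ {x})).Walk ⟨y, hy2⟩ z), p.IsPath ∧
        (∀ (w : ↥(A \ {x})) (q : (G.induce (A \ {x})).Walk ⟨y, hy2⟩ w),
          q.IsPath → q.length ≤ p.length) ∧
        S2 = Subtype.val '' {a | a ∈ p.support})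
    -- P₃ : a maximum-length x-path in G[A]
    (hS3 : ∃ (z : A) (p : (G.induce A).Walk ⟨x, hxA⟩ z), p.IsPath ∧
        (∀ (w : A) (q : (G.induce A).Walk ⟨x, hxA⟩ w), q.IsPath → q.length ≤ p.length) ∧
        S3 = Subtype.val '' {a | a ∈ p.support})
    -- P₄ : a maximum-length y-path in G[A]
    (hS4 : ∃ (z : A) (p : (G.induce A).Walk ⟨y, hyA⟩ z), p.IsPath ∧
        (∀ (w : A) (q : (G.induce A).Walk ⟨y, hyA⟩ w), q.IsPath → q.length ≤ p.length) ∧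
        S4 = Subtype.val '' {a | a ∈ p.support})
    -- P₅ : a maximum-length xy-path in G[A], or ∅ if none exists
    (hS5 : (∃ p : (G.induce A).Walk ⟨x, hxA⟩ ⟨y, hyA⟩, p.IsPath ∧
        (∀ q : (G.induce A).Walk ⟨x, hxA⟩ ⟨y, hyA⟩, q.IsPath → q.length ≤ p.length) ∧
        S5 = Subtype.val '' {a | a ∈ p.support}) ∨
      ((¬ ∃ p : (G.induce A).Walk ⟨x, hxA⟩ ⟨y, hyA⟩, p.IsPath) ∧ S5 = ∅))
    -- P₆ : two vertex-disjoint paths in G[A], an x-path and a y-path, of maximum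
    -- combined length
    (hS6 : ∃ (z w : A) (p : (G.induce A).Walk ⟨x, hxA⟩ z)
        (q : (G.induce A).Walk ⟨y, hyA⟩ w), p.IsPath ∧ q.IsPath ∧
        (∀ a ∈ p.support, a ∉ q.support) ∧
        (∀ (z' w' : A) (p' : (G.induce A).Walk ⟨x, hxA⟩ z')
          (q' : (G.induce A).Walk ⟨y, hyA⟩ w'), p'.IsPath → q'.IsPath →
          (∀ a ∈ p'.support, a ∉ q'.support) →
          p'.length + q'.length ≤ p.length + q.length) ∧
        S6 = Subtype.val '' {a | a ∈ p.support} ∪ Subtype.val '' {a | a ∈ q.support})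
    (hk : ∃ (u v : V) (P : G.Walk u v), P.IsPath ∧ k ≤ P.length) :
    (∃ (u v : A) (P : (G.induce A).Walk u v), P.IsPath ∧ k ≤ P.length) ∨
    (∃ (u v : ↥(S1 ∪ S2 ∪ S3 ∪ S4 ∪ S5 ∪ S6 ∪ B))
      (P : (G.induce (S1 ∪ S2 ∪ S3 ∪ S4 ∪ S5 ∪ S6 ∪ B)).Walk u v),
        P.IsPath ∧ k ≤ P.length) := by
  obtain ⟨hx₁, _, p₁, hp₁, hmax₁, hS1⟩ := hS1
  obtain ⟨hy₂, _, p₂, hp₂, hmax₂, hS2⟩ := hS2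
  obtain ⟨_, p₃, hp₃, hmax₃, hS3⟩ := hS3
  obtain ⟨_, p₄, hp₄, hmax₄, hS4⟩ := hS4
  obtain ⟨_, _, p₆, q₆, hp₆, hq₆, hpq₆, hmax₆, hS6⟩ := hS6
  obtain ⟨u, v, P, hP, hk⟩ := hk
  have hcap : CapturesSeparatorPaths G A (S1 ∪ S2 ∪ S3 ∪ S4 ∪ S5 ∪ S6 ∪ B) x y := by
    refine ⟨capturesPathsFrom_of_forall_length_le hx₁ hp₁ hmax₁ fun z hz => ?_,
      capturesPathsFrom_of_forall_length_le hy₂ hp₂ hmax₂ fun z hz => ?_,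
      capturesPathsFrom_of_forall_length_le hxA hp₃ hmax₃ fun z hz => ?_,
      capturesPathsFrom_of_forall_length_le hyA hp₄ hmax₄ fun z hz => ?_, ?_,
      capturesDisjointPaths_of_forall_length_le hxA hyA hp₆ hq₆ hpq₆ hmax₆
        (fun z hz => ?_) (fun z hz => ?_)⟩
    · simp [hS1 ▸ hz]
    · simp [hS2 ▸ hz]
    · simp [hS3 ▸ hz]
    · simp [hS4 ▸ hz]
    · rcases hS5 with ⟨p₅, hp₅, hmax₅, hS5⟩ | ⟨hno, -⟩
      · exact capturesPathsBetween_of_forall_length_le hxA hyA hp₅ hmax₅ fun z hz => by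
          simp [hS5 ▸ hz]
      · exact capturesPathsBetween_of_not_exists hxA hyA hno
    · simp [(hS6 ▸ Or.inl hz : z ∈ S6)]
    · simp [(hS6 ▸ Or.inr hz : z ∈ S6)]
  exact hasLongPathIn_of_captures hsep hAB hxy (fun z hz => by simp [hz]) hcap hP hk

/-- Reducing a `k`-path across a separation of order two with separator `{x, y}`:
given the six maximum-length witness structures `P₁, …, P₆` in `G[A]`, if `G` has a path
of length at least `k`, then `G[A]` or the induced subgraph on
`V(P₁) ∪ ⋯ ∪ V(P₆) ∪ B` has a path of length at least `k`. -/
theorem paths_through_separation [Fintype V] (G : SimpleGraph V) (k : ℕ)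
    (A B : Set V) (x y : V) (hsep : IsSeparation G A B) (hAB : A ∩ B = {x, y})
    (hxy : x ≠ y) (hxA : x ∈ A) (hyA : y ∈ A)
    (S1 S2 S3 S4 S5 S6 : Set V)
    -- P₁ : a maximum-length x-path in G[A] - {y}
    (hS1 : ∃ (hx1 : x ∈ A \ {y}) (z : ↥(A \ {y}))
        (p : (G.induce (A \ {y})).Walk ⟨x, hx1⟩ z), p.IsPath ∧
        (∀ (w : ↥(A \ {y})) (q : (G.induce (A \ {y})).Walk ⟨x, hx1⟩ w),
          q.IsPath → q.length ≤ p.length) ∧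
        S1 = Subtype.val '' {a | a ∈ p.support})
    -- P₂ : a maximum-length y-path in G[A] - {x}
    (hS2 : ∃ (hy2 : y ∈ A \ {x}) (z : ↥(A \ {x}))
        (p : (G.induce (A \ {x})).Walk ⟨y, hy2⟩ z), p.IsPath ∧
        (∀ (w : ↥(A \ {x})) (q : (G.induce (A \ {x})).Walk ⟨y, hy2⟩ w),
          q.IsPath → q.length ≤ p.length) ∧
        S2 = Subtype.val '' {a | a ∈ p.support})
    -- P₃ : a maximum-length x-path in G[A]
    (hS3 : ∃ (z : A) (p : (G.induce A).Walk ⟨x, hxA⟩ z), p.IsPath ∧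
        (∀ (w : A) (q : (G.induce A).Walk ⟨x, hxA⟩ w), q.IsPath → q.length ≤ p.length) ∧
        S3 = Subtype.val '' {a | a ∈ p.support})
    -- P₄ : a maximum-length y-path in G[A]
    (hS4 : ∃ (z : A) (p : (G.induce A).Walk ⟨y, hyA⟩ z), p.IsPath ∧
        (∀ (w : A) (q : (G.induce A).Walk ⟨y, hyA⟩ w), q.IsPath → q.length ≤ p.length) ∧
        S4 = Subtype.val '' {a | a ∈ p.support})
    -- P₅ : a maximum-length xy-path in G[A], or ∅ if none exists
    (hS5 : (∃ p : (G.induce A).Walk ⟨x, hxA⟩ ⟨y, hyA⟩, p.IsPath ∧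
        (∀ q : (G.induce A).Walk ⟨x, hxA⟩ ⟨y, hyA⟩, q.IsPath → q.length ≤ p.length) ∧
        S5 = Subtype.val '' {a | a ∈ p.support}) ∨
      ((¬ ∃ p : (G.induce A).Walk ⟨x, hxA⟩ ⟨y, hyA⟩, p.IsPath) ∧ S5 = ∅))
    -- P₆ : two vertex-disjoint paths in G[A], an x-path and a y-path, of maximum
    -- combined length
    (hS6 : ∃ (z w : A) (p : (G.induce A).Walk ⟨x, hxA⟩ z)
        (q : (G.induce A).Walk ⟨y, hyA⟩ w), p.IsPath ∧ q.IsPath ∧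
        (∀ a ∈ p.support, a ∉ q.support) ∧
        (∀ (z' w' : A) (p' : (G.induce A).Walk ⟨x, hxA⟩ z')
          (q' : (G.induce A).Walk ⟨y, hyA⟩ w'), p'.IsPath → q'.IsPath →
          (∀ a ∈ p'.support, a ∉ q'.support) →
          p'.length + q'.length ≤ p.length + q.length) ∧
        S6 = Subtype.val '' {a | a ∈ p.support} ∪ Subtype.val '' {a | a ∈ q.support})
    (hk : ∃ (u v : V) (P : G.Walk u v), P.IsPath ∧ k ≤ P.length) :
    (∃ (u v : A) (P : (G.induce A).Walk u v), P.IsPath ∧ k ≤ P.length) ∨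
    (∃ (u v : ↥(S1 ∪ S2 ∪ S3 ∪ S4 ∪ S5 ∪ S6 ∪ B))
      (P : (G.induce (S1 ∪ S2 ∪ S3 ∪ S4 ∪ S5 ∪ S6 ∪ B)).Walk u v),
        P.IsPath ∧ k ≤ P.length) :=
  paths_through_separation_general G k A B x y hsep hAB hxy hxA hyA S1 S2 S3 S4 S5 S6 hS1 hS2 hS3
    hS4 hS5 hS6 hk
end
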